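/- arXiv:1905.05070 — 4 statements merged into one kernel-verified Lean document; each statement's English description precedes it below -/
import Mathlib

section
/- Let α ∈ (0,1), let β_0 := 0 and β_j ∈ [0,1) for 1 ≤ j ≤ M. Then for every choice of mesh values U^0, …, U^M and every 1 ≤ m ≤ M, one has δ_t^α U^m = Σ_{j=0}^{m} κ_{m,j} V^j, where κ_{m,j} := (1 − β_j) D_t^α (Π^m Φ^j)(t_m). -/
noncomputable section
open Real MeasureTheory Finset

namespace L2scheme

/-- Linear Lagrange interpolant through `(x0,y0)`, `(x1,y1)`. -/
def lin (x0 y0 x1 y1 : ℝ) : ℝ → ℝ := fun s => y0 + (y1 - y0) * (s - x0) / (x1 - x0)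

/-- Quadratic Lagrange interpolant through `(x0,y0)`, `(x1,y1)`, `(x2,y2)`. -/
def quadInterp (x0 x1 x2 y0 y1 y2 : ℝ) : ℝ → ℝ := fun s =>
  y0 * ((s - x1) * (s - x2)) / ((x0 - x1) * (x0 - x2)) +
  y1 * ((s - x0) * (s - x2)) / ((x1 - x0) * (x1 - x2)) +
  y2 * ((s - x0) * (s - x1)) / ((x2 - x0) * (x2 - x1))

/-- The polynomial used by the interpolant `Π^m U` on the interval `(t_{j-1}, t_j)`:
for `m = 1` the linear interpolant at `t_0, t_1`; for `1 ≤ j < m` the quadratic interpolant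
at `t_{j-1}, t_j, t_{j+1}`; and for `j = m > 1` the quadratic interpolant at
`t_{m-2}, t_{m-1}, t_m`. -/
def piece (t U : ℕ → ℝ) (m j : ℕ) : ℝ → ℝ :=
  if m = 1 then lin (t 0) (U 0) (t 1) (U 1)
  else if j < m then quadInterp (t (j-1)) (t j) (t (j+1)) (U (j-1)) (U j) (U (j+1))
  else quadInterp (t (m-2)) (t (m-1)) (t m) (U (m-2)) (U (m-1)) (U m)

/-- The L2-type discrete fractional-derivative operator
`δ_t^α U^m := D_t^α (Π^m U)(t_m)`, written as a sum of integrals over the mesh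
subintervals `(t_{j-1}, t_j)`, `1 ≤ j ≤ m`. -/
def delta (α : ℝ) (t U : ℕ → ℝ) (m : ℕ) : ℝ :=
  (1 / Real.Gamma (1 - α)) * ∑ j ∈ Finset.Icc 1 m,
    ∫ s in (t (j-1))..(t j), (t m - s) ^ (-α) * deriv (piece t U m j) s

/-- The Caputo fractional derivative of order `α` of `v` at `x`. -/
def caputo (α : ℝ) (v : ℝ → ℝ) (x : ℝ) : ℝ :=
  (1 / Real.Gamma (1 - α)) * ∫ s in (0:ℝ)..x, (x - s) ^ (-α) * deriv v s

/-- The non-standard basis mesh functions `Φ^j`: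
`Φ^j(t_k) = 0` for `k < j`, `Φ^j(t_j) = 1`, `Φ^j(t_k) = β_k Φ^j(t_{k-1})` for `k > j`. -/
def Phi (β : ℕ → ℝ) (j : ℕ) : ℕ → ℝ
  | 0 => if j = 0 then 1 else 0
  | k + 1 => if k + 1 < j then 0 else if k + 1 = j then 1 else β (k + 1) * Phi β j k

/-- The hat mesh functions `φ^j`. -/
def hatf (j : ℕ) : ℕ → ℝ := fun k => if k = j then 1 else 0

/-- `V^0 := U^0` and `V^j := (U^j - β_j U^{j-1})/(1 - β_j)` for `j ≥ 1`. -/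
def Vv (β U : ℕ → ℝ) (j : ℕ) : ℝ :=
  if j = 0 then U 0 else (U j - β j * U (j - 1)) / (1 - β j)

/-- The coefficients `κ_{m,j} := (1 - β_j) D_t^α (Π^m Φ^j)(t_m)`. -/
def kappa (α : ℝ) (t β : ℕ → ℝ) (m j : ℕ) : ℝ := (1 - β j) * delta α t (Phi β j) m

/-- Property (★): `κ_{m,m} > 0` and `Σ_{j=0}^m κ_{m,j} = 0` for `1 ≤ m ≤ M`,
and `κ_{m,j} ≤ 0` for `0 ≤ j < m ≤ M`. -/
def Star (M : ℕ) (κ : ℕ → ℕ → ℝ) : Prop :=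
  (∀ m, 1 ≤ m → m ≤ M → 0 < κ m m ∧ ∑ j ∈ Finset.range (m + 1), κ m j = 0) ∧
  (∀ m j, j < m → m ≤ M → κ m j ≤ 0)

/-- `τ_j := t_j - t_{j-1}`. -/
def tau (t : ℕ → ℝ) (j : ℕ) : ℝ := t j - t (j - 1)

/-- `τ̃_1 := τ_1` and `τ̃_j := (τ_{j-1} + τ_j)/2` for `j ≥ 2`. -/
def taut (t : ℕ → ℝ) (j : ℕ) : ℝ := if j = 1 then tau t 1 else (tau t (j-1) + tau t j) / 2

/-- `ρ_j := τ_j / τ_{j-1}`. -/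
def rho (t : ℕ → ℝ) (j : ℕ) : ℝ := tau t j / tau t (j - 1)

/-- `σ_j := (τ_j - τ_{j-1})/(τ_j + τ_{j-1})`. -/
def sigma (t : ℕ → ℝ) (j : ℕ) : ℝ := (tau t j - tau t (j-1)) / (tau t j + tau t (j-1))

/-- `B := (α+2)/((1-α)(2-α))`. -/
def Bc (α : ℝ) : ℝ := (α + 2) / ((1 - α) * (2 - α))

/-- `A′ := 4α/((1-α)(2-α))`. -/
def Ac (α : ℝ) : ℝ := 4 * α / ((1 - α) * (2 - α))

/-- `ν := 1 - (1-α)/48`. -/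
def nuc (α : ℝ) : ℝ := 1 - (1 - α) / 48

/-- `B_m := τ̃_m^α Γ(1-α) 2^α δ_t^α φ^m(t_m)`. -/
def Bm (α : ℝ) (t : ℕ → ℝ) (m : ℕ) : ℝ :=
  taut t m ^ α * Real.Gamma (1 - α) * 2 ^ α * delta α t (hatf m) m

/-- `A_m := -τ̃_m^α Γ(1-α) 2^α δ_t^α φ^{m-1}(t_m)`. -/
def Am (α : ℝ) (t : ℕ → ℝ) (m : ℕ) : ℝ :=
  -(taut t m ^ α * Real.Gamma (1 - α) * 2 ^ α * delta α t (hatf (m-1)) m)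

/-- `F_m := τ̃_m^α Γ(1-α) 2^α δ_t^α (φ^{m-2} + φ^{m-1} + φ^m)(t_m)`. -/
def Fm (α : ℝ) (t : ℕ → ℝ) (m : ℕ) : ℝ :=
  taut t m ^ α * Real.Gamma (1 - α) * 2 ^ α *
    delta α t (fun k => hatf (m-2) k + hatf (m-1) k + hatf m k) m

/-- A temporal mesh `0 = t_0 < t_1 < ⋯ < t_M = T`. -/
def Mesh (t : ℕ → ℝ) (M : ℕ) (T : ℝ) : Prop :=
  t 0 = 0 ∧ t M = T ∧ ∀ j, j < M → t j < t (j + 1)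

/-- `σ_j ≥ σ_{j+1} ≥ 0` for all `j ≥ 2`. -/
def SigmaDecr (t : ℕ → ℝ) (M : ℕ) : Prop :=
  ∀ j, 2 ≤ j → j ≤ M → 0 ≤ sigma t j ∧ (j + 1 ≤ M → sigma t (j + 1) ≤ sigma t j)

/-- Quasi-graded mesh of degree `r` with constants `cm, cp`:
`τ_1 ≃ M^{-r}`, `τ_j ≃ t_j/j` and `t_j ≃ τ_1 j^r` for `1 ≤ j ≤ M`. -/
def QuasiGraded (t : ℕ → ℝ) (M : ℕ) (r cm cp : ℝ) : Prop :=
  (cm * (M : ℝ) ^ (-r) ≤ tau t 1 ∧ tau t 1 ≤ cp * (M : ℝ) ^ (-r)) ∧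
  ∀ j, 1 ≤ j → j ≤ M →
    (cm * (t j / j) ≤ tau t j ∧ tau t j ≤ cp * (t j / j)) ∧
    (cm * (tau t 1 * (j : ℝ) ^ r) ≤ t j ∧ t j ≤ cp * (tau t 1 * (j : ℝ) ^ r))

/-- The stability bound `𝒰^j(τ_1; γ)`. -/
def Ubound (α γ τ1 tj : ℝ) : ℝ :=
  if 0 < γ then τ1 * tj ^ (α - 1)
  else if γ = 0 then τ1 * tj ^ (α - 1) * (1 + Real.log (tj / τ1))
  else τ1 * tj ^ (α - 1) * (τ1 / tj) ^ γ

/-- The pointwise error bound `ℰ^m`. -/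
def Ebound (α r : ℝ) (M : ℕ) (t1 tm : ℝ) : ℝ :=
  if r < 3 - α then (M : ℝ) ^ (-r) * tm ^ (α - 1)
  else if r = 3 - α then (M : ℝ) ^ (α - 3) * tm ^ (α - 1) * (1 + Real.log (tm / t1))
  else (M : ℝ) ^ (α - 3) * tm ^ (α - (3 - α) / r)

/-- `η(σ) := (1-σ²)(B/A′ - σ/(2(1+σ)))`. -/
def eta (α σ : ℝ) : ℝ := (1 - σ ^ 2) * (Bc α / Ac α - σ / (2 * (1 + σ)))

/-- `β_1 := β_2`, `β_j := (θ/2) ν / η(σ_j)` for `j ≥ 2` (and `β_0 := 0`). -/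
def betaG (α θ : ℝ) (t : ℕ → ℝ) (j : ℕ) : ℝ :=
  if j = 0 then 0
  else if j = 1 then θ / 2 * nuc α / eta α (sigma t 2)
  else θ / 2 * nuc α / eta α (sigma t j)

end L2scheme

/-! On each mesh interval, `Π^m U` is a polynomial whose coefficients depend linearly on
`U^0, …, U^m` only, so `δ_t^α` is a linear functional of `(U^0, …, U^m)` (the weight
`(t_m - s)^{-α}` is integrable since `α < 1`). The theorem is then the expansion
`U^k = Σ_j (1 - β_j) V^j Φ^j(t_k)` for `k ≤ m`, which follows by induction on `k` from
`Φ^j(t_{k+1}) = β_{k+1} Φ^j(t_k)` for `j ≤ k` and `(1 - β_{k+1}) V^{k+1} = U^{k+1} - β_{k+1} U^k`. -/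

namespace L2scheme

section Interpolant

variable (t : ℕ → ℝ) (m j : ℕ)

theorem piece_add (U W : ℕ → ℝ) : piece t (U + W) m j = piece t U m j + piece t W m j := by
  funext s
  unfold piece
  split_ifs <;> simp only [lin, quadInterp, Pi.add_apply] <;> ring

theorem piece_smul (c : ℝ) (U : ℕ → ℝ) : piece t (c • U) m j = c • piece t U m j := by
  funext s
  unfold piece
  split_ifs <;> simp only [lin, quadInterp, Pi.smul_apply, smul_eq_mul] <;> ring

theorem contDiff_piece (U : ℕ → ℝ) : ContDiff ℝ 1 (piece t U m j) := by
  unfold piece lin quadInterp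
  split_ifs <;> fun_prop

theorem piece_congr {U W : ℕ → ℝ} (hUW : ∀ k ≤ m, U k = W k) (hj : j ≤ m) :
    piece t U m j = piece t W m j := by
  unfold piece
  split_ifs with h1 h2
  · rw [hUW 0 (by omega), hUW 1 (by omega)]
  · rw [hUW (j - 1) (by omega), hUW j (by omega), hUW (j + 1) (by omega)]
  · rw [hUW (m - 2) (by omega), hUW (m - 1) (by omega), hUW m le_rfl]

end Interpolant

theorem intervalIntegrable_rpow_neg_mul {α : ℝ} (hα : α < 1) {g : ℝ → ℝ} (hg : Continuous g)
    (x a b : ℝ) : IntervalIntegrable (fun s => (x - s) ^ (-α) * g s) volume a b := by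
  have hpow : IntervalIntegrable (fun s : ℝ => s ^ (-α)) volume (x - a) (x - b) :=
    intervalIntegral.intervalIntegrable_rpow' (by linarith)
  simpa only [sub_sub_cancel] using (hpow.comp_sub_left x).mul_continuousOn hg.continuousOn

section Delta

variable {α : ℝ} (t : ℕ → ℝ) (m : ℕ)

theorem integrable_delta_integrand (hα : α < 1) (U : ℕ → ℝ) (j : ℕ) (a b : ℝ) :
    IntervalIntegrable (fun s => (t m - s) ^ (-α) * deriv (piece t U m j) s) volume a b :=
  intervalIntegrable_rpow_neg_mul hα ((contDiff_piece t m j U).continuous_deriv le_rfl) _ _ _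

theorem delta_add (hα : α < 1) (U W : ℕ → ℝ) :
    delta α t (U + W) m = delta α t U m + delta α t W m := by
  have hderiv (j : ℕ) :
      deriv (piece t (U + W) m j) = deriv (piece t U m j) + deriv (piece t W m j) := by
    funext s
    rw [piece_add, Pi.add_apply, deriv_add ((contDiff_piece t m j U).differentiable one_ne_zero s)
      ((contDiff_piece t m j W).differentiable one_ne_zero s)]
  simp only [delta, hderiv, Pi.add_apply, mul_add]
  rw [← mul_add, ← Finset.sum_add_distrib]
  congr 1
  exact Finset.sum_congr rfl fun j _ => intervalIntegral.integral_add
    (integrable_delta_integrand t m hα U j _ _) (integrable_delta_integrand t m hα W j _ _)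

theorem delta_smul (c : ℝ) (U : ℕ → ℝ) : delta α t (c • U) m = c * delta α t U m := by
  have hderiv (j : ℕ) : deriv (piece t (c • U) m j) = c • deriv (piece t U m j) := by
    funext s
    rw [piece_smul, Pi.smul_apply, deriv_const_smul c
      ((contDiff_piece t m j U).differentiable one_ne_zero s)]
  simp only [delta, hderiv, Pi.smul_apply, smul_eq_mul, mul_left_comm _ c,
    intervalIntegral.integral_const_mul, ← Finset.mul_sum]

def deltaLinearMap (hα : α < 1) : (ℕ → ℝ) →ₗ[ℝ] ℝ where
  toFun U := delta α t U m
  map_add' := delta_add t m hα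
  map_smul' := delta_smul t m

theorem deltaLinearMap_apply (hα : α < 1) (U : ℕ → ℝ) : deltaLinearMap t m hα U = delta α t U m :=
  rfl

theorem delta_congr {U W : ℕ → ℝ} (hUW : ∀ k ≤ m, U k = W k) :
    delta α t U m = delta α t W m := by
  unfold delta
  congr 1
  refine Finset.sum_congr rfl fun j hj => ?_
  rw [piece_congr t m j hUW (Finset.mem_Icc.mp hj).2]

end Delta

section Basis

variable (β : ℕ → ℝ)

theorem Phi_of_lt {j k : ℕ} (h : k < j) : Phi β j k = 0 := by
  cases k <;> simp [Phi] <;> omega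

theorem Phi_succ (j k : ℕ) :
    Phi β j (k + 1) = if j = k + 1 then 1 else β (k + 1) * Phi β j k := by
  rcases lt_trichotomy j (k + 1) with h | rfl | h
  · simp [Phi, h.ne, h.ne', h.not_gt]
  · simp [Phi]
  · simp [Phi, h, h.ne', Phi_of_lt β (show k < j by omega)]

theorem one_sub_mul_Vv (hβ0 : β 0 = 0) (U : ℕ → ℝ) {j : ℕ} (hj : β j ≠ 1) :
    (1 - β j) * Vv β U j = U j - β j * U (j - 1) := by
  rcases j with _ | j
  · simp [Vv, hβ0]
  · rw [Vv, if_neg j.succ_ne_zero, mul_div_cancel₀ _ (sub_ne_zero.mpr hj.symm)]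

theorem sum_Vv_mul_Phi (hβ0 : β 0 = 0) (U : ℕ → ℝ) {n : ℕ}
    (hβ : ∀ j, 1 ≤ j → j ≤ n → β j ≠ 1) :
    ∀ k ≤ n, ∑ j ∈ Finset.range (n + 1), (1 - β j) * Vv β U j * Phi β j k = U k := by
  intro k
  induction k with
  | zero =>
    intro _
    simp [Phi, Vv, hβ0]
  | succ k ih =>
    intro hk
    have hsplit (j : ℕ) : (1 - β j) * Vv β U j * Phi β j (k + 1) =
        (if j = k + 1 then (1 - β j) * Vv β U j else 0) +
          β (k + 1) * ((1 - β j) * Vv β U j * Phi β j k) := by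
      rw [Phi_succ]
      split_ifs with h
      · rw [h, Phi_of_lt β k.lt_succ_self]; ring
      · ring
    rw [Finset.sum_congr rfl fun j _ => hsplit j, Finset.sum_add_distrib, Finset.sum_ite_eq',
      if_pos (Finset.mem_range.mpr (by omega)), ← Finset.mul_sum, ih (by omega),
      one_sub_mul_Vv β hβ0 U (hβ (k + 1) (by omega) hk), Nat.add_sub_cancel]
    ring

end Basis

end L2scheme

open L2scheme

theorem statement1_general (α : ℝ) (hα : α ∈ Set.Ioo (0:ℝ) 1) (M : ℕ)
    (t : ℕ → ℝ)
    (β : ℕ → ℝ) (hβ0 : β 0 = 0) (hβ : ∀ j, 1 ≤ j → j ≤ M → 0 ≤ β j ∧ β j < 1)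
    (U : ℕ → ℝ) (m : ℕ) (hmM : m ≤ M) :
    delta α t U m = ∑ j ∈ Finset.range (m + 1), kappa α t β m j * Vv β U j := by
  have hU : ∀ k ≤ m, U k = (∑ j ∈ range (m + 1), ((1 - β j) * Vv β U j) • Phi β j) k := by
    intro k hk
    rw [Finset.sum_apply]
    exact (sum_Vv_mul_Phi β hβ0 U (fun j h1 h2 => (hβ j h1 (h2.trans hmM)).2.ne) k hk).symm
  calc delta α t U m
      = deltaLinearMap t m hα.2 (∑ j ∈ range (m + 1), ((1 - β j) * Vv β U j) • Phi β j) :=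
        delta_congr t m hU
    _ = ∑ j ∈ range (m + 1), kappa α t β m j * Vv β U j := by
        simp only [map_sum, map_smul, smul_eq_mul, deltaLinearMap_apply, kappa]
        exact Finset.sum_congr rfl fun j _ => by ring

/-- `δ_t^α U^m = Σ_{j=0}^m κ_{m,j} V^j` with
`κ_{m,j} = (1 - β_j) D_t^α (Π^m Φ^j)(t_m)`. -/
theorem statement1 (α T : ℝ) (hα : α ∈ Set.Ioo (0:ℝ) 1) (M : ℕ) (hM : 1 ≤ M)
    (t : ℕ → ℝ) (ht : Mesh t M T)
    (β : ℕ → ℝ) (hβ0 : β 0 = 0) (hβ : ∀ j, 1 ≤ j → j ≤ M → 0 ≤ β j ∧ β j < 1)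
    (U : ℕ → ℝ) (m : ℕ) (hm : 1 ≤ m) (hmM : m ≤ M) :
    delta α t U m = ∑ j ∈ Finset.range (m + 1), kappa α t β m j * Vv β U j :=
  statement1_general α hα M t β hβ0 hβ U m hmM
end
end

section
/- Let α ∈ (0,1) and let the temporal mesh be uniform: τ_j = τ = T/M for all 1 ≤ j ≤ M. Then B_1 = A_1 > 0, and for every 2 ≤ m ≤ M: B_m = B; 0 ≤ A′ − A_m ≤ α/24, so in particular A_m ≥ ν A′; and F_m ≤ 1 + (A′ − A_m). -/
/-!
On a uniform mesh `t_j = jτ`, the substitution `s = t_m - 2τv` turns the contribution of the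
interval `(t_{j-1}, t_j)` to `δ_t^α U^m` into `∫ v^{-α} ℓ(v) dv` over `[(m-j)/2, (m-j+1)/2]`,
with `ℓ` affine, and the normalisation `τ̃_m^α Γ(1-α) 2^α` cancels every power of `τ`.
For hat functions only the last few intervals contribute. On `[0, 1]` (the last two intervals,
which share one quadratic) the integrals are explicit and give `B` and `-A′`; the interval
`[1, 3/2]` contributes `A′ - A_m = ∫ v^{-α}(5 - 4v)` once `m ≥ 3`, and `F_m` collects
`∫_1^{3/2} v^{-α}(4v - 3) + ∫_{3/2}^2 v^{-α}(7 - 4v)`.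
Since `∫ (w - v) dv` vanishes on `[w - h, w + h]`, the monotonicity and the Lipschitz bound of
`v^{-α}` squeeze `∫ v^{-α}(w - v) dv` between `0` and `α (w-h)^{-α-1} 2h³/3`, which gives
`A′ - A_m ≤ α/24` and bounds the last tail by `α/36`; the chord bound
`v^{-α} ≤ 1 - 2α(v-1)/3` on `[1, 3/2]` (weighted AM-GM) handles the remaining term of `F_m`.
-/

noncomputable section
open Real MeasureTheory Finset

open L2scheme

namespace L2scheme

open Set

section Calculus

variable {α : ℝ}

lemma intervalIntegrable_rpow_neg_mul_of_lt_one (hα : α < 1) {g : ℝ → ℝ} (hg : Continuous g)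
    (a b : ℝ) : IntervalIntegrable (fun v => v ^ (-α) * g v) volume a b :=
  (intervalIntegral.intervalIntegrable_rpow' (by linarith)).mul_continuousOn hg.continuousOn

lemma intervalIntegrable_rpow_neg_mul_of_pos {a b : ℝ} (ha : 0 < a) (hb : 0 < b) {g : ℝ → ℝ}
    (hg : Continuous g) : IntervalIntegrable (fun v => v ^ (-α) * g v) volume a b := by
  refine (intervalIntegral.intervalIntegrable_rpow (Or.inr fun h0 => ?_)).mul_continuousOn
    hg.continuousOn
  rcases Set.mem_uIcc.1 h0 with h | h <;> linarith [h.1]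

lemma integral_rpow_neg_sub_mul {l : ℝ} (hl : 0 < l) {a b : ℝ} (ha : 0 ≤ a) (hb : 0 ≤ b)
    (c : ℝ) (g : ℝ → ℝ) :
    ∫ s in (c - l * b)..(c - l * a), (c - s) ^ (-α) * g s
      = l ^ (1 - α) * ∫ v in a..b, v ^ (-α) * g (c - l * v) := by
  rw [← intervalIntegral.smul_integral_comp_sub_mul, smul_eq_mul,
    ← intervalIntegral.integral_const_mul, ← intervalIntegral.integral_const_mul]
  refine intervalIntegral.integral_congr fun v hv => ?_
  have hv0 : 0 ≤ v := le_trans (le_min ha hb) hv.1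
  rw [sub_sub_cancel, Real.mul_rpow hl.le hv0, Real.rpow_sub hl, Real.rpow_one,
    Real.rpow_neg hl.le]
  field_simp

lemma integral_zero_one_rpow_neg_mul_affine (hα : α < 1) (p q : ℝ) :
    ∫ v in (0:ℝ)..1, v ^ (-α) * (p + q * v) = p / (1 - α) + q / (2 - α) := by
  have hsplit : EqOn (fun v : ℝ => v ^ (-α) * (p + q * v))
      (fun v => p * v ^ (-α) + q * v ^ (-α + 1)) (uIcc 0 1) := by
    intro v hv
    dsimp only
    rw [Real.rpow_add_one' (by simpa using hv.1) (by linarith)]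
    ring
  have hi : ∀ r : ℝ, -1 < r → IntervalIntegrable (fun v : ℝ => v ^ r) volume 0 1 :=
    fun r hr => intervalIntegral.intervalIntegrable_rpow' hr
  rw [intervalIntegral.integral_congr hsplit, intervalIntegral.integral_add
    ((hi _ (by linarith)).const_mul p) ((hi _ (by linarith)).const_mul q),
    intervalIntegral.integral_const_mul, intervalIntegral.integral_const_mul,
    integral_rpow (Or.inl (by linarith)), integral_rpow (Or.inl (by linarith)),
    Real.zero_rpow (by linarith), Real.zero_rpow (by linarith)]
  norm_num
  ring_nf

end Calculus

section Estimates

variable {α : ℝ}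

lemma abs_rpow_neg_sub_rpow_neg_le (hα : 0 ≤ α) {L v w : ℝ} (hL : 0 < L) (hv : L ≤ v)
    (hw : L ≤ w) : |v ^ (-α) - w ^ (-α)| ≤ α * L ^ (-α - 1) * |v - w| := by
  have hderiv : ∀ x ∈ Ici L,
      HasDerivWithinAt (fun y : ℝ => y ^ (-α)) (-α * x ^ (-α - 1)) (Ici L) x :=
    fun x hx => (Real.hasDerivAt_rpow_const (Or.inl (hL.trans_le hx).ne')).hasDerivWithinAt
  have hbound : ∀ x ∈ Ici L, ‖-α * x ^ (-α - 1)‖ ≤ α * L ^ (-α - 1) := by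
    intro x hx
    rw [norm_mul, norm_neg, Real.norm_of_nonneg hα,
      Real.norm_of_nonneg (Real.rpow_nonneg (hL.le.trans hx) _)]
    exact mul_le_mul_of_nonneg_left (Real.rpow_le_rpow_of_nonpos hL hx (by linarith)) hα
  simpa only [Real.norm_eq_abs] using
    (convex_Ici L).norm_image_sub_le_of_norm_hasDerivWithin_le hderiv hbound hw hv

lemma rpow_neg_sub_mul_sub_nonneg (hα : 0 ≤ α) {v w : ℝ} (hv : 0 < v) (hw : 0 < w) :
    0 ≤ (v ^ (-α) - w ^ (-α)) * (w - v) := by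
  rcases le_total v w with h | h
  · exact mul_nonneg (sub_nonneg.2 (Real.rpow_le_rpow_of_nonpos hv h (by linarith)))
      (sub_nonneg.2 h)
  · exact mul_nonneg_of_nonpos_of_nonpos
      (sub_nonpos.2 (Real.rpow_le_rpow_of_nonpos hw h (by linarith))) (sub_nonpos.2 h)

lemma rpow_neg_sub_mul_sub_le (hα : 0 ≤ α) {L v w : ℝ} (hL : 0 < L) (hv : L ≤ v) (hw : L ≤ w) :
    (v ^ (-α) - w ^ (-α)) * (w - v) ≤ α * L ^ (-α - 1) * (v - w) ^ 2 :=
  calc (v ^ (-α) - w ^ (-α)) * (w - v) ≤ |v ^ (-α) - w ^ (-α)| * |v - w| := by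
        rw [abs_sub_comm v w, ← abs_mul]
        exact le_abs_self _
    _ ≤ α * L ^ (-α - 1) * |v - w| * |v - w| :=
        mul_le_mul_of_nonneg_right (abs_rpow_neg_sub_rpow_neg_le hα hL hv hw) (abs_nonneg _)
    _ = α * L ^ (-α - 1) * (v - w) ^ 2 := by rw [mul_assoc, abs_mul_abs_self, sq]

section SymmetricInterval

variable {w h : ℝ}

lemma integral_mul_sub_self_eq_zero (c : ℝ) : ∫ v in (w - h)..(w + h), c * (w - v) = 0 := by
  rw [intervalIntegral.integral_const_mul, intervalIntegral.integral_comp_sub_left (fun x => x),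
    integral_id]
  ring

lemma integral_rpow_neg_mul_sub_nonneg (hα : 0 ≤ α) (hwh : 0 < w - h) (hh : 0 ≤ h) :
    0 ≤ ∫ v in (w - h)..(w + h), v ^ (-α) * (w - v) := by
  rw [← integral_mul_sub_self_eq_zero (w ^ (-α))]
  refine intervalIntegral.integral_mono_on (by linarith)
    (Continuous.intervalIntegrable (by fun_prop) _ _)
    (intervalIntegrable_rpow_neg_mul_of_pos hwh (by linarith) (by fun_prop)) fun v hv => ?_
  have := rpow_neg_sub_mul_sub_nonneg hα (hwh.trans_le hv.1) (by linarith : 0 < w)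
  linarith [sub_mul (v ^ (-α)) (w ^ (-α)) (w - v)]

lemma integral_rpow_neg_mul_sub_le (hα : 0 ≤ α) (hwh : 0 < w - h) (hh : 0 ≤ h) :
    ∫ v in (w - h)..(w + h), v ^ (-α) * (w - v) ≤ 2 * α * (w - h) ^ (-α - 1) * h ^ 3 / 3 := by
  set C := α * (w - h) ^ (-α - 1)
  calc _ ≤ ∫ v in (w - h)..(w + h), (C * (v - w) ^ 2 + w ^ (-α) * (w - v)) := by
        refine intervalIntegral.integral_mono_on (by linarith)
          (intervalIntegrable_rpow_neg_mul_of_pos hwh (by linarith) (by fun_prop))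
          (Continuous.intervalIntegrable (by fun_prop) _ _) fun v hv => ?_
        have := rpow_neg_sub_mul_sub_le hα hwh hv.1 (by linarith : w - h ≤ w)
        linarith [sub_mul (v ^ (-α)) (w ^ (-α)) (w - v)]
    _ = 2 * α * (w - h) ^ (-α - 1) * h ^ 3 / 3 := by
        rw [intervalIntegral.integral_add (Continuous.intervalIntegrable (by fun_prop) _ _)
          (Continuous.intervalIntegrable (by fun_prop) _ _), integral_mul_sub_self_eq_zero,
          intervalIntegral.integral_const_mul,
          intervalIntegral.integral_comp_sub_right (fun x => x ^ 2), integral_pow]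
        ring

lemma integral_rpow_neg_mul_four_sub_eq :
    ∫ v in (w - h)..(w + h), v ^ (-α) * (4 * w - 4 * v)
      = 4 * ∫ v in (w - h)..(w + h), v ^ (-α) * (w - v) := by
  rw [← intervalIntegral.integral_const_mul]
  congr 1
  funext v
  ring

end SymmetricInterval

lemma integral_gap_nonneg (hα : 0 ≤ α) : 0 ≤ ∫ v in (1:ℝ)..3/2, v ^ (-α) * (5 - 4 * v) := by
  have := integral_rpow_neg_mul_four_sub_eq (α := α) (w := 5/4) (h := 1/4)
  norm_num at this
  rw [this]
  have := integral_rpow_neg_mul_sub_nonneg hα (w := 5/4) (h := 1/4) (by norm_num) (by norm_num)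
  norm_num at this
  positivity

lemma integral_gap_le (hα : 0 ≤ α) : ∫ v in (1:ℝ)..3/2, v ^ (-α) * (5 - 4 * v) ≤ α / 24 := by
  have := integral_rpow_neg_mul_four_sub_eq (α := α) (w := 5/4) (h := 1/4)
  norm_num at this
  rw [this]
  have := integral_rpow_neg_mul_sub_le hα (w := 5/4) (h := 1/4) (by norm_num) (by norm_num)
  norm_num at this
  linarith

lemma integral_tail_le (hα : 0 ≤ α) : ∫ v in (3/2:ℝ)..2, v ^ (-α) * (7 - 4 * v) ≤ α / 36 := by
  have := integral_rpow_neg_mul_four_sub_eq (α := α) (w := 7/4) (h := 1/4)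
  norm_num at this
  rw [this]
  have := integral_rpow_neg_mul_sub_le hα (w := 7/4) (h := 1/4) (by norm_num) (by norm_num)
  norm_num at this
  have hpow : (3/2 : ℝ) ^ (-α - 1) ≤ 2 / 3 := by
    calc (3/2 : ℝ) ^ (-α - 1) ≤ (3/2) ^ (-1 : ℝ) :=
          Real.rpow_le_rpow_of_exponent_le (by norm_num) (by linarith)
      _ = 2 / 3 := by norm_num [Real.rpow_neg_one]
  nlinarith

lemma rpow_neg_le_one_sub_mul (hα0 : 0 ≤ α) (hα1 : α ≤ 1) {v : ℝ} (hv1 : 1 ≤ v)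
    (hv2 : v ≤ 3/2) : v ^ (-α) ≤ 1 - 2 * α / 3 * (v - 1) := by
  have hv : 0 < v := by linarith
  -- weighted AM-GM `(1/v)^α * 1^(1-α) ≤ α/v + (1-α)`, and `1/v` lies below its chord
  have hamgm := Real.geom_mean_le_arith_mean2_weighted hα0 (sub_nonneg.2 hα1)
    (one_div_pos.2 hv).le zero_le_one (add_sub_cancel α 1)
  have hinv : 1 / v ≤ 1 - 2 / 3 * (v - 1) := by
    rw [div_le_iff₀ hv]
    nlinarith
  rw [Real.one_rpow, mul_one, Real.div_rpow zero_le_one hv.le, Real.one_rpow, one_div,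
    ← Real.rpow_neg hv.le] at hamgm
  nlinarith

lemma integral_four_mul_sub_three_le (hα0 : 0 ≤ α) (hα1 : α ≤ 1) :
    ∫ v in (1:ℝ)..3/2, v ^ (-α) * (4 * v - 3)
      ≤ 1 - 2 * α / 9 + ∫ v in (1:ℝ)..3/2, v ^ (-α) * (5 - 4 * v) := by
  have hint : ∀ g : ℝ → ℝ, Continuous g →
      IntervalIntegrable (fun v => v ^ (-α) * g v) volume 1 (3/2) :=
    fun g hg => intervalIntegrable_rpow_neg_mul_of_pos (by norm_num) (by norm_num) hg
  rw [← sub_le_iff_le_add, ← intervalIntegral.integral_sub (hint _ (by fun_prop))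
    (hint _ (by fun_prop))]
  calc _ ≤ ∫ v in (1:ℝ)..3/2, 8 * ((v - 1) - 2 * α / 3 * (v - 1) ^ 2) := by
        refine intervalIntegral.integral_mono_on (by norm_num)
          ((hint _ (by fun_prop)).sub (hint _ (by fun_prop)))
          (Continuous.intervalIntegrable (by fun_prop) _ _) fun v hv => ?_
        have := rpow_neg_le_one_sub_mul hα0 hα1 hv.1 hv.2
        nlinarith [hv.1]
    _ = 1 - 2 * α / 9 := by
        rw [intervalIntegral.integral_const_mul, intervalIntegral.integral_sub
          (Continuous.intervalIntegrable (by fun_prop) _ _)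
          (Continuous.intervalIntegrable (by fun_prop) _ _), intervalIntegral.integral_const_mul,
          intervalIntegral.integral_comp_sub_right (fun x => x),
          intervalIntegral.integral_comp_sub_right (fun x => x ^ 2), integral_id, integral_pow]
        ring

lemma nuc_mul_Ac_le (hα0 : 0 ≤ α) (hα1 : α < 1) {A : ℝ} (h : Ac α - A ≤ α / 24) :
    nuc α * Ac α ≤ A := by
  have hgap : Ac α - nuc α * Ac α = α / (12 * (2 - α)) := by
    have h1 : 1 - α ≠ 0 := by linarith
    have h2 : 2 - α ≠ 0 := by linarith
    rw [Ac, nuc]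
    field_simp
    ring
  have : α / 24 ≤ α / (12 * (2 - α)) :=
    div_le_div_of_nonneg_left hα0 (by nlinarith) (by nlinarith)
  linarith

end Estimates

/-- `2τ` times the slope of the quadratic interpolant of `y0, y1, y2` at `x - τ, x, x + τ`,
evaluated at `s = c - 2τv`, where `d = (c - x)/τ`. -/
def quadSlope (y0 y1 y2 d v : ℝ) : ℝ := (y2 - y0) + 2 * (y0 - 2 * y1 + y2) * (d - 2 * v)

section UniformNodes

variable {α τ : ℝ}

lemma quadSlope_self (y d v : ℝ) : quadSlope y y y d v = 0 := by
  rw [quadSlope]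
  ring

lemma quadInterp_uniform_eq (hτ : τ ≠ 0) (x y0 y1 y2 : ℝ) :
    quadInterp (x - τ) x (x + τ) y0 y1 y2 = fun s =>
      y1 + (y2 - y0) / (2 * τ) * (s - x) + (y0 - 2 * y1 + y2) / (2 * τ ^ 2) * (s - x) ^ 2 := by
  funext s
  simp only [quadInterp]
  rw [show (x - τ - x) * (x - τ - (x + τ)) = 2 * τ ^ 2 by ring,
    show (x - (x - τ)) * (x - (x + τ)) = -τ ^ 2 by ring,
    show (x + τ - (x - τ)) * (x + τ - x) = 2 * τ ^ 2 by ring]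
  field_simp
  ring

lemma two_mul_deriv_quadInterp_uniform (hτ : τ ≠ 0) (x y0 y1 y2 s : ℝ) :
    2 * τ * deriv (quadInterp (x - τ) x (x + τ) y0 y1 y2) s
      = (y2 - y0) + 2 * (y0 - 2 * y1 + y2) * ((s - x) / τ) := by
  have hlin := (hasDerivAt_id' s).sub_const x
  have hder := ((hlin.const_mul ((y2 - y0) / (2 * τ))).fun_add
    ((hlin.pow 2).const_mul ((y0 - 2 * y1 + y2) / (2 * τ ^ 2)))).const_add y1
  simp only [Pi.pow_apply, ← add_assoc] at hder
  rw [quadInterp_uniform_eq hτ, hder.deriv]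
  field_simp
  ring

lemma integral_quadInterp_uniform (hτ : 0 < τ) {a b : ℝ} (ha : 0 ≤ a) (hb : 0 ≤ b)
    (c x y0 y1 y2 : ℝ) :
    τ ^ α * 2 ^ α * ∫ s in (c - 2 * τ * b)..(c - 2 * τ * a),
        (c - s) ^ (-α) * deriv (quadInterp (x - τ) x (x + τ) y0 y1 y2) s
      = ∫ v in a..b, v ^ (-α) * quadSlope y0 y1 y2 ((c - x) / τ) v := by
  have hscale : τ ^ α * 2 ^ α * (2 * τ) ^ (1 - α) = 2 * τ := by
    rw [Real.rpow_sub (by positivity), Real.rpow_one, Real.mul_rpow zero_le_two hτ.le]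
    field_simp
  rw [integral_rpow_neg_sub_mul (by positivity) ha hb, ← mul_assoc, hscale,
    ← intervalIntegral.integral_const_mul]
  refine intervalIntegral.integral_congr fun v _ => ?_
  rw [mul_left_comm, two_mul_deriv_quadInterp_uniform hτ.ne', quadSlope]
  field_simp
  ring

lemma integral_zero_one_rpow_neg_mul_quadSlope (hα : α < 1) (y0 y1 y2 d : ℝ) :
    ∫ v in (0:ℝ)..1, v ^ (-α) * quadSlope y0 y1 y2 d v
      = ((y2 - y0) + 2 * (y0 - 2 * y1 + y2) * d) / (1 - α) - 4 * (y0 - 2 * y1 + y2) / (2 - α) := by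
  have haffine : (fun v => v ^ (-α) * quadSlope y0 y1 y2 d v) = fun v => v ^ (-α) *
      (((y2 - y0) + 2 * (y0 - 2 * y1 + y2) * d) + (-4 * (y0 - 2 * y1 + y2)) * v) := by
    funext v
    rw [quadSlope]
    ring
  rw [haffine, integral_zero_one_rpow_neg_mul_affine hα]
  ring

end UniformNodes

section UniformMesh

variable {α τ : ℝ} {t : ℕ → ℝ} {m : ℕ}

lemma taut_uniform (ht : ∀ i ≤ m, t i = τ * i) (hm : 1 ≤ m) : taut t m = τ := by
  unfold taut tau
  split_ifs with h
  · subst h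
    rw [ht 1 le_rfl, ht 0 (by omega)]
    simp
  · rw [ht m le_rfl, ht (m - 1) (by omega), ht (m - 1 - 1) (by omega),
      Nat.cast_sub (by omega), Nat.cast_sub (by omega), Nat.cast_sub (by omega)]
    ring

lemma integral_piece_uniform (hτ : 0 < τ) (ht : ∀ i ≤ m, t i = τ * i) {i j : ℕ} (hj : 1 ≤ j)
    (hjm : j ≤ m) (hi : 1 ≤ i) (him : i + 1 ≤ m) (y0 y1 y2 : ℝ) :
    τ ^ α * 2 ^ α * ∫ s in t (j - 1)..t j,
        (t m - s) ^ (-α) * deriv (quadInterp (t (i - 1)) (t i) (t (i + 1)) y0 y1 y2) s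
      = ∫ v in ((m:ℝ) - j) / 2..((m:ℝ) - j + 1) / 2,
          v ^ (-α) * quadSlope y0 y1 y2 ((m:ℝ) - i) v := by
  have hjm' : (j:ℝ) ≤ m := by exact_mod_cast hjm
  rw [ht (j - 1) (by omega), ht j hjm, ht m le_rfl, ht (i - 1) (by omega), ht i (by omega),
    ht (i + 1) him, Nat.cast_sub hj, Nat.cast_sub hi]
  push_cast
  rw [show τ * ((i:ℝ) - 1) = τ * i - τ by ring, show τ * ((i:ℝ) + 1) = τ * i + τ by ring]
  convert integral_quadInterp_uniform (α := α) hτ (a := ((m:ℝ) - j) / 2)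
    (b := ((m:ℝ) - j + 1) / 2) (by linarith) (by linarith) (τ * m) (τ * i) y0 y1 y2 using 4
  · ring
  · ring
  · field_simp

lemma scaled_delta_one (hα : α < 1) (hτ : 0 < τ) (h0 : t 0 = 0) (h1 : t 1 = τ) (U : ℕ → ℝ) :
    τ ^ α * Real.Gamma (1 - α) * 2 ^ α * delta α t U 1 = 2 ^ α * (U 1 - U 0) / (1 - α) := by
  have hΓ : Real.Gamma (1 - α) ≠ 0 := (Real.Gamma_pos_of_pos (by linarith)).ne'
  have hderiv : deriv (lin 0 (U 0) τ (U 1)) = fun _ => (U 1 - U 0) / τ := by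
    funext s
    have h := ((((hasDerivAt_id' s).sub_const 0).const_mul (U 1 - U 0)).div_const
      (τ - 0)).const_add (U 0)
    rw [show lin 0 (U 0) τ (U 1) = fun s => U 0 + (U 1 - U 0) * (s - 0) / (τ - 0) from rfl,
      h.deriv]
    simp
  have hkernel : ∫ s in (0:ℝ)..τ, (τ - s) ^ (-α) = τ ^ (1 - α) / (1 - α) := by
    rw [intervalIntegral.integral_comp_sub_left (fun u => u ^ (-α)), sub_self, sub_zero,
      integral_rpow (Or.inl (by linarith)), Real.zero_rpow (by linarith)]
    ring_nf
  simp only [delta, Finset.Icc_self, Finset.sum_singleton, Nat.sub_self, piece, if_pos, h0, h1,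
    hderiv, intervalIntegral.integral_mul_const, hkernel]
  rw [Real.rpow_sub hτ, Real.rpow_one]
  field_simp

lemma integral_last_two_pieces_uniform (hα : α < 1) (hτ : 0 < τ) {k : ℕ}
    (ht : ∀ i ≤ k + 2, t i = τ * i) (y0 y1 y2 : ℝ) :
    τ ^ α * 2 ^ α *
      ((∫ s in t k..t (k + 1), (t (k + 2) - s) ^ (-α) *
          deriv (quadInterp (t k) (t (k + 1)) (t (k + 2)) y0 y1 y2) s) +
        ∫ s in t (k + 1)..t (k + 2), (t (k + 2) - s) ^ (-α) *
          deriv (quadInterp (t k) (t (k + 1)) (t (k + 2)) y0 y1 y2) s)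
      = ∫ v in (0:ℝ)..1, v ^ (-α) * quadSlope y0 y1 y2 1 v := by
  have hint := fun a b => intervalIntegrable_rpow_neg_mul_of_lt_one hα
    (by unfold quadSlope; fun_prop : Continuous (quadSlope y0 y1 y2 1)) a b
  have hfirst := integral_piece_uniform (α := α) hτ ht (i := k + 1) (j := k + 1) (by omega)
    (by omega) (by omega) le_rfl y0 y1 y2
  have hsecond := integral_piece_uniform (α := α) hτ ht (i := k + 1) (j := k + 2) (by omega)
    le_rfl (by omega) le_rfl y0 y1 y2
  simp only [Nat.add_sub_cancel, show k + 2 - 1 = k + 1 from rfl] at hfirst hsecond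
  rw [mul_add, hfirst, hsecond]
  push_cast
  norm_num
  rw [add_comm, intervalIntegral.integral_add_adjacent_intervals (hint _ _) (hint _ _)]

-- On `(t_{j-1}, t_j)` substitute `s = t_m - 2τv`; the last two intervals carry the same
-- quadratic, so they merge into one integral over `v ∈ [0, 1]`.
lemma scaled_delta_uniform (hα : α < 1) (hτ : 0 < τ) (ht : ∀ i ≤ m, t i = τ * i) (hm : 2 ≤ m)
    (U : ℕ → ℝ) :
    τ ^ α * Real.Gamma (1 - α) * 2 ^ α * delta α t U m =
      (∫ v in (0:ℝ)..1, v ^ (-α) * quadSlope (U (m - 2)) (U (m - 1)) (U m) 1 v) +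
      ∑ j ∈ Finset.Icc 1 (m - 2), ∫ v in ((m:ℝ) - j) / 2..((m:ℝ) - j + 1) / 2,
        v ^ (-α) * quadSlope (U (j - 1)) (U j) (U (j + 1)) ((m:ℝ) - j) v := by
  obtain ⟨k, rfl⟩ : ∃ k, m = k + 2 := ⟨m - 2, by omega⟩
  have hΓ : Real.Gamma (1 - α) ≠ 0 := (Real.Gamma_pos_of_pos (by linarith)).ne'
  have hpiece : ∀ j < k + 2, piece t U (k + 2) j
      = quadInterp (t (j - 1)) (t j) (t (j + 1)) (U (j - 1)) (U j) (U (j + 1)) := fun j hj => by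
    simp [piece, hj]
  have hlast : piece t U (k + 2) (k + 2)
      = quadInterp (t k) (t (k + 1)) (t (k + 2)) (U k) (U (k + 1)) (U (k + 2)) := by
    simp [piece]
  have hhistory : τ ^ α * 2 ^ α * ∑ j ∈ Finset.Icc 1 k, ∫ s in t (j - 1)..t j,
      (t (k + 2) - s) ^ (-α) * deriv (piece t U (k + 2) j) s
      = ∑ j ∈ Finset.Icc 1 k, ∫ v in ((↑(k + 2):ℝ) - j) / 2..((↑(k + 2):ℝ) - j + 1) / 2,
        v ^ (-α) * quadSlope (U (j - 1)) (U j) (U (j + 1)) ((↑(k + 2):ℝ) - j) v := by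
    rw [Finset.mul_sum]
    refine Finset.sum_congr rfl fun j hj => ?_
    rw [Finset.mem_Icc] at hj
    rw [hpiece j (by omega)]
    exact integral_piece_uniform hτ ht hj.1 (by omega) hj.1 (by omega) _ _ _
  rw [delta, Finset.sum_Icc_succ_top (b := k + 1) (by omega),
    Finset.sum_Icc_succ_top (b := k) (by omega), show k + 1 + 1 = k + 2 from rfl,
    show k + 2 - 2 = k from rfl, show k + 2 - 1 = k + 1 from rfl, hpiece (k + 1) (by omega),
    Nat.add_sub_cancel, hlast, ← hhistory,
    ← integral_last_two_pieces_uniform hα hτ ht]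
  field_simp
  ring

lemma Bm_one_uniform (hα : α < 1) (hτ : 0 < τ) (ht : ∀ i ≤ 1, t i = τ * i) :
    Bm α t 1 = 2 ^ α / (1 - α) := by
  rw [Bm, taut_uniform ht le_rfl, scaled_delta_one hα hτ (by simpa using ht 0 zero_le_one)
    (by simpa using ht 1 le_rfl)]
  simp [hatf]

lemma Am_one_uniform (hα : α < 1) (hτ : 0 < τ) (ht : ∀ i ≤ 1, t i = τ * i) :
    Am α t 1 = 2 ^ α / (1 - α) := by
  rw [Am, taut_uniform ht le_rfl, scaled_delta_one hα hτ (by simpa using ht 0 zero_le_one)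
    (by simpa using ht 1 le_rfl)]
  simp [hatf, neg_div]

lemma Bm_uniform (hα : α < 1) (hτ : 0 < τ) (ht : ∀ i ≤ m, t i = τ * i) (hm : 2 ≤ m) :
    Bm α t m = Bc α := by
  obtain ⟨k, rfl⟩ : ∃ k, m = k + 2 := ⟨m - 2, by omega⟩
  have h1 : 1 - α ≠ 0 := by linarith
  have h2 : 2 - α ≠ 0 := by linarith
  rw [Bm, taut_uniform ht (by omega), scaled_delta_uniform hα hτ ht hm,
    Finset.sum_eq_zero fun j hj => ?_]
  · simp (disch := omega) only [hatf, Nat.add_sub_cancel, if_true, if_neg, add_zero,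
      integral_zero_one_rpow_neg_mul_quadSlope hα, Bc]
    field_simp
    ring
  · rw [Finset.mem_Icc] at hj
    simp (disch := omega) only [hatf, if_neg, quadSlope_self, mul_zero,
      intervalIntegral.integral_zero]

lemma Am_two_uniform (hα : α < 1) (hτ : 0 < τ) (ht : ∀ i ≤ 2, t i = τ * i) :
    Am α t 2 = Ac α := by
  have h1 : 1 - α ≠ 0 := by linarith
  have h2 : 2 - α ≠ 0 := by linarith
  rw [Am, taut_uniform ht (by norm_num), scaled_delta_uniform hα hτ ht le_rfl]
  norm_num [hatf, integral_zero_one_rpow_neg_mul_quadSlope hα, Ac]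
  field_simp
  ring

lemma Ac_sub_Am_uniform (hα : α < 1) (hτ : 0 < τ) (ht : ∀ i ≤ m, t i = τ * i) (hm : 3 ≤ m) :
    Ac α - Am α t m = ∫ v in (1:ℝ)..3/2, v ^ (-α) * (5 - 4 * v) := by
  obtain ⟨k, rfl⟩ : ∃ k, m = k + 3 := ⟨m - 3, by omega⟩
  have h1 : 1 - α ≠ 0 := by linarith
  have h2 : 2 - α ≠ 0 := by linarith
  rw [Am, taut_uniform ht (by omega), scaled_delta_uniform hα hτ ht (by omega),
    show k + 3 - 2 = k + 1 from rfl, Finset.sum_Icc_succ_top (by omega),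
    Finset.sum_eq_zero fun j hj => ?_]
  · have hd : ((k + 3 : ℕ) : ℝ) - ((k + 1 : ℕ) : ℝ) = 2 := by push_cast; ring
    have hslope : ∀ v, quadSlope 0 0 1 2 v = 5 - 4 * v := fun v => by rw [quadSlope]; ring
    simp (disch := omega) only [hatf, Nat.add_sub_cancel, if_pos, if_neg, hd, hslope,
      integral_zero_one_rpow_neg_mul_quadSlope hα, Ac]
    norm_num
    field_simp
    ring
  · rw [Finset.mem_Icc] at hj
    simp (disch := omega) only [hatf, if_neg, quadSlope_self, mul_zero,
      intervalIntegral.integral_zero]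

lemma Fm_two_uniform (hα : α < 1) (hτ : 0 < τ) (ht : ∀ i ≤ 2, t i = τ * i) : Fm α t 2 = 0 := by
  rw [Fm, taut_uniform ht (by norm_num), scaled_delta_uniform hα hτ ht le_rfl]
  simp [hatf, quadSlope_self]

lemma Fm_three_uniform (hα : α < 1) (hτ : 0 < τ) (ht : ∀ i ≤ 3, t i = τ * i) :
    Fm α t 3 = ∫ v in (1:ℝ)..3/2, v ^ (-α) * (4 * v - 3) := by
  have hslope : ∀ v, quadSlope 0 1 1 2 v = 4 * v - 3 := fun v => by rw [quadSlope]; ring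
  rw [Fm, taut_uniform ht (by norm_num), scaled_delta_uniform hα hτ ht (by norm_num)]
  norm_num [hatf, quadSlope_self, hslope]

lemma Fm_uniform (hα : α < 1) (hτ : 0 < τ) (ht : ∀ i ≤ m, t i = τ * i) (hm : 4 ≤ m) :
    Fm α t m = (∫ v in (1:ℝ)..3/2, v ^ (-α) * (4 * v - 3)) +
      ∫ v in (3/2:ℝ)..2, v ^ (-α) * (7 - 4 * v) := by
  obtain ⟨k, rfl⟩ : ∃ k, m = k + 4 := ⟨m - 4, by omega⟩
  rw [Fm, taut_uniform ht (by omega), scaled_delta_uniform hα hτ ht (by omega),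
    show k + 4 - 2 = k + 1 + 1 from rfl, Finset.sum_Icc_succ_top (by omega),
    Finset.sum_Icc_succ_top (by omega), Finset.sum_eq_zero fun j hj => ?_]
  · have hd2 : ((k + 4 : ℕ) : ℝ) - ((k + 1 + 1 : ℕ) : ℝ) = 2 := by push_cast; ring
    have hd3 : ((k + 4 : ℕ) : ℝ) - ((k + 1 : ℕ) : ℝ) = 3 := by push_cast; ring
    have hslope2 : ∀ v, quadSlope 0 1 1 2 v = 4 * v - 3 := fun v => by rw [quadSlope]; ring
    have hslope3 : ∀ v, quadSlope 0 0 1 3 v = 7 - 4 * v := fun v => by rw [quadSlope]; ring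
    simp (disch := omega) only [hatf, if_pos, if_neg, if_true, add_zero, zero_add,
      Nat.add_sub_cancel, hd2, hd3, quadSlope_self, mul_zero, intervalIntegral.integral_zero,
      hslope2, hslope3]
    norm_num
    ring
  · rw [Finset.mem_Icc] at hj
    simp (disch := omega) only [hatf, if_neg, add_zero, quadSlope_self, mul_zero,
      intervalIntegral.integral_zero]

lemma Ac_sub_Am_mem_uniform (hα0 : 0 ≤ α) (hα1 : α < 1) (hτ : 0 < τ)
    (ht : ∀ i ≤ m, t i = τ * i) (hm : 2 ≤ m) :
    0 ≤ Ac α - Am α t m ∧ Ac α - Am α t m ≤ α / 24 := by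
  rcases (show m = 2 ∨ 3 ≤ m by omega) with rfl | hm3
  · rw [Am_two_uniform hα1 hτ ht, sub_self]
    exact ⟨le_rfl, by positivity⟩
  · rw [Ac_sub_Am_uniform hα1 hτ ht hm3]
    exact ⟨integral_gap_nonneg hα0, integral_gap_le hα0⟩

lemma Fm_le_uniform (hα0 : 0 ≤ α) (hα1 : α < 1) (hτ : 0 < τ) (ht : ∀ i ≤ m, t i = τ * i)
    (hm : 2 ≤ m) : Fm α t m ≤ 1 + (Ac α - Am α t m) := by
  have hhead := integral_four_mul_sub_three_le hα0 hα1.le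
  rcases (show m = 2 ∨ m = 3 ∨ 4 ≤ m by omega) with rfl | rfl | hm4
  · rw [Fm_two_uniform hα1 hτ ht, Am_two_uniform hα1 hτ ht]
    norm_num
  · rw [Fm_three_uniform hα1 hτ ht, Ac_sub_Am_uniform hα1 hτ ht le_rfl]
    linarith
  · rw [Fm_uniform hα1 hτ ht hm4, Ac_sub_Am_uniform hα1 hτ ht (by omega)]
    linarith [integral_tail_le hα0]

end UniformMesh

end L2scheme

/-- uniform temporal mesh, bounds on `A_m, B_m, F_m`. -/
theorem statement3 (α T : ℝ) (hα : α ∈ Set.Ioo (0:ℝ) 1) (hT : 0 < T)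
    (M : ℕ) (hM : 1 ≤ M) (t : ℕ → ℝ)
    (ht : ∀ j, j ≤ M → t j = T * j / M) :
    (Bm α t 1 = Am α t 1 ∧ 0 < Bm α t 1) ∧
    ∀ m, 2 ≤ m → m ≤ M →
      Bm α t m = Bc α ∧
      (0 ≤ Ac α - Am α t m ∧ Ac α - Am α t m ≤ α / 24) ∧
      nuc α * Ac α ≤ Am α t m ∧
      Fm α t m ≤ 1 + (Ac α - Am α t m) := by
  obtain ⟨hα0, hα1⟩ := hα
  have hτ : 0 < T / M := div_pos hT (by exact_mod_cast hM)
  have hmesh : ∀ m ≤ M, ∀ j ≤ m, t j = T / M * j := fun m hm j hj => by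
    rw [ht j (hj.trans hm)]
    ring
  have hB1 := Bm_one_uniform hα1 hτ (hmesh 1 hM)
  refine ⟨⟨hB1.trans (Am_one_uniform hα1 hτ (hmesh 1 hM)).symm, ?_⟩, fun m hm hmM => ?_⟩
  · rw [hB1]
    have : 0 < 1 - α := by linarith
    positivity
  · have hgap := Ac_sub_Am_mem_uniform hα0.le hα1 hτ (hmesh m hmM) hm
    exact ⟨Bm_uniform hα1 hτ (hmesh m hmM) hm, hgap, nuc_mul_Ac_le hα0.le hα1 hgap.2,
      Fm_le_uniform hα0.le hα1 hτ (hmesh m hmM) hm⟩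
end
end

section
/- Let M ≥ 1, let β_0 := 0 and β_j ∈ [0,1) for 1 ≤ j ≤ M, and let real coefficients κ_{m,j} (0 ≤ j ≤ m ≤ M) satisfy property (★). For real numbers U^0, …, U^M define V^0 := U^0, V^j := (U^j − β_j U^{j−1})/(1 − β_j) for 1 ≤ j ≤ M, and F^m := Σ_{j=0}^m κ_{m,j} V^j for 1 ≤ m ≤ M. If U^0 ≥ 0 and F^m ≥ 0 for all 1 ≤ m ≤ M, then U^j ≥ 0 for all 0 ≤ j ≤ M. -/
noncomputable section
open Real MeasureTheory Finset

namespace L2scheme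

/-- Forward substitution: `κ_{m,m} V^m ≥ -Σ_{j<m} κ_{m,j} V^j ≥ 0`. -/
theorem nonneg_of_lowerTriangular_sum_nonneg {M : ℕ} {κ : ℕ → ℕ → ℝ}
    (hdiag : ∀ m, 1 ≤ m → m ≤ M → 0 < κ m m) (hoff : ∀ m j, j < m → m ≤ M → κ m j ≤ 0)
    {V : ℕ → ℝ} (hV0 : 0 ≤ V 0)
    (hF : ∀ m, 1 ≤ m → m ≤ M → 0 ≤ ∑ j ∈ range (m + 1), κ m j * V j) :
    ∀ m, m ≤ M → 0 ≤ V m := by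
  intro m
  induction m using Nat.strong_induction_on with
  | _ m ih =>
    intro hm
    rcases Nat.eq_zero_or_pos m with rfl | hm1
    · exact hV0
    have hlower : ∑ j ∈ range m, κ m j * V j ≤ 0 :=
      sum_nonpos fun j hj =>
        have hjm := mem_range.mp hj
        mul_nonpos_of_nonpos_of_nonneg (hoff m j hjm hm) (ih j hjm (hjm.le.trans hm))
    have hdiagV : 0 ≤ κ m m * V m := by
      have := hF m hm1 hm
      rw [sum_range_succ] at this
      linarith
    exact nonneg_of_mul_nonneg_right hdiagV (hdiag m hm1 hm)

theorem eq_mul_Vv_add_mul {β : ℕ → ℝ} (U : ℕ → ℝ) {n : ℕ} (hn : n ≠ 0) (hβn : β n ≠ 1) :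
    U n = (1 - β n) * Vv β U n + β n * U (n - 1) := by
  have : 1 - β n ≠ 0 := sub_ne_zero.mpr hβn.symm
  rw [Vv, if_neg hn, mul_div_cancel₀ _ this]
  ring

/-- `U^j` is a convex combination of `V^j` and `U^{j-1}`. -/
theorem nonneg_of_Vv_nonneg {M : ℕ} {β U : ℕ → ℝ}
    (hβ : ∀ j, 1 ≤ j → j ≤ M → 0 ≤ β j ∧ β j < 1) (hV : ∀ j, j ≤ M → 0 ≤ Vv β U j) :
    ∀ j, j ≤ M → 0 ≤ U j := by
  intro j
  induction j with
  | zero => simpa [Vv] using hV 0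
  | succ n ih =>
    intro hn
    obtain ⟨hβ_nonneg, hβ_lt_one⟩ := hβ (n + 1) (Nat.le_add_left 1 n) hn
    rw [eq_mul_Vv_add_mul U n.add_one_ne_zero hβ_lt_one.ne, Nat.add_sub_cancel]
    have := mul_nonneg (sub_nonneg.mpr hβ_lt_one.le) (hV (n + 1) hn)
    have := mul_nonneg hβ_nonneg (ih (by omega))
    linarith

end L2scheme

open L2scheme
theorem statement10_general (M : ℕ) (β : ℕ → ℝ)
    (hβ : ∀ j, 1 ≤ j → j ≤ M → 0 ≤ β j ∧ β j < 1)
    (κ : ℕ → ℕ → ℝ) (hκ : Star M κ) (U : ℕ → ℝ)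
    (hU0 : 0 ≤ U 0)
    (hF : ∀ m, 1 ≤ m → m ≤ M →
      0 ≤ ∑ j ∈ Finset.range (m + 1), κ m j * Vv β U j) :
    ∀ j, j ≤ M → 0 ≤ U j :=
  nonneg_of_Vv_nonneg hβ <|
    nonneg_of_lowerTriangular_sum_nonneg (fun m hm1 hm => (hκ.1 m hm1 hm).1) hκ.2
      (by simpa [Vv] using hU0) hF

/-- discrete inverse-monotonicity from property (★). -/
theorem statement10 (M : ℕ) (hM : 1 ≤ M) (β : ℕ → ℝ) (hβ0 : β 0 = 0)
    (hβ : ∀ j, 1 ≤ j → j ≤ M → 0 ≤ β j ∧ β j < 1)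
    (κ : ℕ → ℕ → ℝ) (hκ : Star M κ) (U : ℕ → ℝ)
    (hU0 : 0 ≤ U 0)
    (hF : ∀ m, 1 ≤ m → m ≤ M →
      0 ≤ ∑ j ∈ Finset.range (m + 1), κ m j * Vv β U j) :
    ∀ j, j ≤ M → 0 ≤ U j :=
  statement10_general M β hβ κ hκ U hU0 hF
end
end

section
/- Let α ∈ (0,1), let 0 < t_1 < ⋯ < t_M, let β_0 := 0 and β_j ∈ [0,1) for 1 ≤ j ≤ M, and let real coefficients κ_{m,j} (0 ≤ j ≤ m ≤ M) satisfy property (★) together with κ_{1,1} ≥ c₀ t_1^{−α}, κ_{2,2} ≥ c₀ t_2^{−α} (when M ≥ 2), and −κ_{m,0} ≥ c₀ t_m^{−α} for all 3 ≤ m ≤ M, for some constant c₀ > 0. For real numbers U^0, …, U^M define V^0 := U^0, V^j := (U^j − β_j U^{j−1})/(1 − β_j) for 1 ≤ j ≤ M, and F^m := Σ_{j=0}^m κ_{m,j} V^j for 1 ≤ m ≤ M. If U^0 = 0, then |U^m| ≤ C max_{1 ≤ j ≤ m} { t_j^α |F^j| } for all 1 ≤ m ≤ M, where the constant C depends only on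 c₀. -/
/-!
The equations `∑_{j ≤ m} κ_{m,j} V^j = F^m` obey a discrete maximum principle. By (★),
`κ_{m,m} V^m = F^m + ∑_{0<j<m} |κ_{m,j}| V^j` with `∑_{0<j<m} |κ_{m,j}| = κ_{m,m} + κ_{m,0}`,
so `κ_{m,m} |V^m| ≤ |F^m| + (κ_{m,m} + κ_{m,0}) K` whenever `|V^j| ≤ K` for `0 < j < m`.
For `m ≥ 3` the surplus `-κ_{m,0} ≥ c₀ t_m^{-α}` absorbs `|F^m| ≤ G t_m^{-α}`, where
`G = max_j t_j^α |F^j|`, so the bound `|V^j| ≤ 2G/c₀` propagates; for `m = 1, 2` the lower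
bound on `κ_{m,m}` gives `|V^1| ≤ G/c₀` and then `|V^2| ≤ 2G/c₀`. Finally `U^m` is a convex
combination of `V^m` and `U^{m-1}`.
-/

noncomputable section
open Real MeasureTheory Finset

namespace L2scheme

lemma Star.mono {M N : ℕ} {κ : ℕ → ℕ → ℝ} (h : Star M κ) (hNM : N ≤ M) : Star N κ :=
  ⟨fun m hm hmN => h.1 m hm (hmN.trans hNM), fun m j hj hmN => h.2 m j hj (hmN.trans hNM)⟩

lemma pos_of_pos_of_lt_succ {t : ℕ → ℝ} {M : ℕ} (ht1 : 0 < t 1)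
    (ht : ∀ j, 1 ≤ j → j < M → t j < t (j + 1)) : ∀ k, 1 ≤ k → k ≤ M → 0 < t k := by
  refine Nat.le_induction (fun _ => ht1) fun k hk ih hkM => ?_
  exact (ih (by omega)).trans (ht k hk (by omega))

lemma abs_le_div_mul_of_rpow_mul_abs_le {a c x G α f : ℝ} (ha : 0 < a) (hc : 0 < c)
    (hf : a ^ α * |f| ≤ G) (hx : c * a ^ (-α) ≤ x) : |f| ≤ G / c * x := by
  have hapos : 0 < a ^ α := rpow_pos_of_pos ha α
  have hG : 0 ≤ G := (by positivity : 0 ≤ a ^ α * |f|).trans hf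
  calc |f| = a ^ (-α) * (a ^ α * |f|) := by
        rw [rpow_neg ha.le, inv_mul_cancel_left₀ hapos.ne']
    _ ≤ a ^ (-α) * G := by gcongr
    _ = G / c * (c * a ^ (-α)) := by field_simp
    _ ≤ G / c * x := by gcongr

lemma mul_abs_le_abs_sum_add {a v : ℕ → ℝ} {k : ℕ} {K : ℝ} (hk : 1 ≤ k)
    (hsum : ∑ i ∈ range (k + 1), a i = 0) (hneg : ∀ i < k, a i ≤ 0) (hv0 : v 0 = 0)
    (hvK : ∀ i, 1 ≤ i → i < k → |v i| ≤ K) :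
    a k * |v k| ≤ |∑ i ∈ range (k + 1), a i * v i| + (a k + a 0) * K := by
  have split : ∀ f : ℕ → ℝ, ∑ i ∈ range (k + 1), f i = f 0 + ∑ i ∈ Ico 1 k, f i + f k :=
    fun f => by rw [sum_range_succ, range_eq_Ico, sum_eq_sum_Ico_succ_bot (by omega)]
  have hinner : ∑ i ∈ Ico 1 k, -a i = a k + a 0 := by
    rw [split] at hsum
    rw [sum_neg_distrib]
    linarith
  have hrest : |∑ i ∈ Ico 1 k, a i * v i| ≤ (a k + a 0) * K := by
    calc |∑ i ∈ Ico 1 k, a i * v i| ≤ ∑ i ∈ Ico 1 k, -a i * |v i| := by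
          refine (abs_sum_le_sum_abs _ _).trans (sum_le_sum fun i hi => ?_)
          rw [abs_mul, abs_of_nonpos (hneg i (mem_Ico.mp hi).2)]
      _ ≤ ∑ i ∈ Ico 1 k, -a i * K := by
          refine sum_le_sum fun i hi => ?_
          obtain ⟨hi1, hik⟩ := mem_Ico.mp hi
          exact mul_le_mul_of_nonneg_left (hvK i hi1 hik) (neg_nonneg.mpr (hneg i hik))
      _ = (a k + a 0) * K := by rw [← sum_mul, hinner]
  have hakvk : a k * v k = ∑ i ∈ range (k + 1), a i * v i - ∑ i ∈ Ico 1 k, a i * v i := by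
    rw [split, hv0]
    ring
  have hak : 0 ≤ a k := by
    have : 0 ≤ ∑ i ∈ Ico 1 k, -a i :=
      sum_nonneg fun i hi => neg_nonneg.mpr (hneg i (mem_Ico.mp hi).2)
    linarith [hneg 0 (by omega)]
  calc a k * |v k| = |a k * v k| := by rw [abs_mul, abs_of_nonneg hak]
    _ ≤ |∑ i ∈ range (k + 1), a i * v i| + |∑ i ∈ Ico 1 k, a i * v i| := by
        rw [hakvk]; exact abs_sub _ _
    _ ≤ _ := by gcongr

lemma abs_le_two_mul_of_star {M : ℕ} {κ : ℕ → ℕ → ℝ} (hstar : Star M κ) {V : ℕ → ℝ}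
    (hV0 : V 0 = 0) {L : ℝ} (h1 : |∑ i ∈ range 2, κ 1 i * V i| ≤ L * κ 1 1)
    (h2 : 2 ≤ M → |∑ i ∈ range 3, κ 2 i * V i| ≤ L * κ 2 2)
    (h3 : ∀ k, 3 ≤ k → k ≤ M → |∑ i ∈ range (k + 1), κ k i * V i| ≤ L * -κ k 0) :
    ∀ k, 1 ≤ k → k ≤ M → |V k| ≤ 2 * L := by
  have row : ∀ k K, 1 ≤ k → k ≤ M → (∀ i, 1 ≤ i → i < k → |V i| ≤ K) →
      κ k k * |V k| ≤ |∑ i ∈ range (k + 1), κ k i * V i| + (κ k k + κ k 0) * K :=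
    fun k _ hk hkM hvK => mul_abs_le_abs_sum_add hk (hstar.1 k hk hkM).2
      (fun i hi => hstar.2 k i hi hkM) hV0 hvK
  have hV1 : 1 ≤ M → |V 1| ≤ L := fun hM => by
    have := row 1 0 le_rfl hM (fun i hi hi1 => by omega)
    exact le_of_mul_le_mul_left (by linarith) (hstar.1 1 le_rfl hM).1
  intro k
  induction k using Nat.strong_induction_on with
  | _ k ih =>
  intro hk hkM
  have hL : 0 ≤ L := (abs_nonneg _).trans (hV1 (hk.trans hkM))
  have hκ : 0 < κ k k := (hstar.1 k hk hkM).1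
  have hκ0 : κ k 0 ≤ 0 := hstar.2 k 0 (by omega) hkM
  refine le_of_mul_le_mul_left ?_ hκ
  obtain rfl | rfl | hk3 : k = 1 ∨ k = 2 ∨ 3 ≤ k := by omega
  · exact mul_le_mul_of_nonneg_left ((hV1 hkM).trans (by linarith)) hκ.le
  · have := row 2 L hk hkM fun i hi1 hi2 => by
      obtain rfl : i = 1 := by omega
      exact hV1 (by omega)
    nlinarith [h2 hkM]
  · have := row k (2 * L) hk hkM fun i hi1 hik => ih i hik hi1 (hik.le.trans hkM)
    nlinarith [h3 k hk3 hkM]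

lemma one_sub_mul_Vv_add_mul {β U : ℕ → ℝ} {j : ℕ} (hj : j ≠ 0) (hβ : β j ≠ 1) :
    (1 - β j) * Vv β U j + β j * U (j - 1) = U j := by
  rw [Vv, if_neg hj, mul_div_cancel₀ _ (sub_ne_zero.mpr hβ.symm)]
  ring

lemma abs_le_of_abs_Vv_le {β U : ℕ → ℝ} {n : ℕ} {K : ℝ} (hU0 : U 0 = 0) (hK : 0 ≤ K)
    (hβ : ∀ j, 1 ≤ j → j ≤ n → 0 ≤ β j ∧ β j < 1)
    (hV : ∀ j, 1 ≤ j → j ≤ n → |Vv β U j| ≤ K) : ∀ k ≤ n, |U k| ≤ K := by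
  intro k
  induction k with
  | zero => simpa [hU0] using hK
  | succ k ih =>
    intro hkn
    obtain ⟨hβ0, hβ1⟩ := hβ (k + 1) (by omega) hkn
    rw [← one_sub_mul_Vv_add_mul (U := U) k.add_one_ne_zero hβ1.ne, Nat.add_sub_cancel]
    calc |(1 - β (k + 1)) * Vv β U (k + 1) + β (k + 1) * U k|
        ≤ (1 - β (k + 1)) * |Vv β U (k + 1)| + β (k + 1) * |U k| := by
          refine (abs_add_le _ _).trans_eq ?_
          rw [abs_mul, abs_mul, abs_of_pos (by linarith), abs_of_nonneg hβ0]
      _ ≤ (1 - β (k + 1)) * K + β (k + 1) * K := by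
          gcongr
          · exact hV (k + 1) (by omega) hkn
          · exact ih (by omega)
      _ = K := by ring

end L2scheme

open L2scheme

/-- stability bound `|U^m| ≲ max_j t_j^α |F^j|` from property (★)
and lower bounds on the coefficients, with a constant depending only on `c₀`. -/
theorem statement11 (c0 : ℝ) (hc0 : 0 < c0) :
    ∃ C : ℝ, 0 < C ∧
      ∀ (α : ℝ), α ∈ Set.Ioo (0:ℝ) 1 →
      ∀ (M : ℕ) (t β : ℕ → ℝ) (κ : ℕ → ℕ → ℝ), 1 ≤ M →
        0 < t 1 → (∀ j, 1 ≤ j → j < M → t j < t (j + 1)) →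
        β 0 = 0 → (∀ j, 1 ≤ j → j ≤ M → 0 ≤ β j ∧ β j < 1) →
        Star M κ →
        c0 * t 1 ^ (-α) ≤ κ 1 1 →
        (2 ≤ M → c0 * t 2 ^ (-α) ≤ κ 2 2) →
        (∀ m, 3 ≤ m → m ≤ M → c0 * t m ^ (-α) ≤ -κ m 0) →
        ∀ U : ℕ → ℝ, U 0 = 0 →
        ∀ m, ∀ hm : 1 ≤ m, m ≤ M →
          |U m| ≤ C * (Finset.Icc 1 m).sup' (Finset.nonempty_Icc.mpr hm)
            (fun j => t j ^ α * |∑ i ∈ Finset.range (j + 1), κ j i * Vv β U i|) := by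
  refine ⟨2 / c0, by positivity, ?_⟩
  intro α _ M t β κ _ ht1 ht _ hβ hstar hκ11 hκ22 hκ0 U hU0 m hm hmM
  set G := (Icc 1 m).sup' (nonempty_Icc.mpr hm)
    (fun j => t j ^ α * |∑ i ∈ range (j + 1), κ j i * Vv β U i|)
  have htpos := pos_of_pos_of_lt_succ ht1 ht
  have hF : ∀ k x, 1 ≤ k → k ≤ m → c0 * t k ^ (-α) ≤ x →
      |∑ i ∈ range (k + 1), κ k i * Vv β U i| ≤ G / c0 * x := fun k x hk hkm hx =>
    abs_le_div_mul_of_rpow_mul_abs_le (htpos k hk (hkm.trans hmM)) hc0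
      (le_sup' (fun j => t j ^ α * |∑ i ∈ range (j + 1), κ j i * Vv β U i|)
        (mem_Icc.mpr ⟨hk, hkm⟩)) hx
  have hV : ∀ k, 1 ≤ k → k ≤ m → |Vv β U k| ≤ 2 * (G / c0) :=
    abs_le_two_mul_of_star (hstar.mono hmM) (by simp [Vv, hU0]) (hF 1 _ le_rfl hm hκ11)
      (fun h2 => hF 2 _ one_le_two h2 (hκ22 (h2.trans hmM)))
      (fun k hk3 hkm => hF k _ (by omega) hkm (hκ0 k hk3 (hkm.trans hmM)))
  calc |U m| ≤ 2 * (G / c0) :=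
        abs_le_of_abs_Vv_le hU0 ((abs_nonneg _).trans (hV 1 le_rfl hm))
          (fun j hj hjm => hβ j hj (hjm.trans hmM)) hV m le_rfl
    _ = 2 / c0 * G := by ring
end
end
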